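/- arXiv:1810.04125 — 2 statements merged into one kernel-verified Lean document; each statement's English description precedes it below -/
import Mathlib

section
/- Let σ₁ ≥ ... ≥ σ_r > 0, set ‖A‖_F² = σ₁²+...+σ_r², and let X̄_d be the average of d i.i.d. copies of X = Σ_k σ_k² ξ_k² with ξ_k i.i.d. N(0,1). Then for every τ ∈ [0,1), P[X̄_d ≤ ‖A‖_F² τ] ≤ exp(dτ/2) · ‖A‖_F^{dr} · ∏_{k=1}^r (‖A‖_F² + σ_k²)^{-d/2}. -/
open MeasureTheory ProbabilityTheory Real

/-! Chernoff's lower-tail bound at `t = -1/(2‖A‖_F²)`: by independence the moment generating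
function of the sum `d X̄_d` factors over the `d r` terms `σ_k² ξ_{ik}²`, and for a standard
Gaussian `ξ` one has `E[exp(t c ξ²)] = (1 - 2ct)^{-1/2}`, which at this `t` equals
`‖A‖_F / √(‖A‖_F² + σ_k²)`. -/

lemma mgf_sq_gaussianReal {t : ℝ} (ht : t < 1 / 2) :
    mgf (fun x => x ^ 2) (gaussianReal 0 1) t = (√(1 - 2 * t))⁻¹ := by
  have hpdf (x : ℝ) : gaussianPDFReal 0 1 x • exp (t * x ^ 2)
      = (√(2 * π))⁻¹ * exp (-(1 / 2 - t) * x ^ 2) := by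
    simp only [gaussianPDFReal, NNReal.coe_one, mul_one, sub_zero, smul_eq_mul]
    rw [mul_assoc, ← exp_add]
    ring_nf
  rw [mgf, integral_gaussianReal_eq_integral_smul one_ne_zero]
  simp_rw [hpdf]
  rw [integral_const_mul, integral_gaussian,
    show π / (1 / 2 - t) = 2 * π / (1 - 2 * t) by field_simp,
    sqrt_div' _ (by linarith : 0 ≤ 1 - 2 * t)]
  have : 0 < √(2 * π) := by positivity
  field_simp

lemma mgf_const_mul_sq_of_map_eq_gaussianReal {Ω : Type*} [MeasurableSpace Ω] {μ : Measure Ω}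
    {X : Ω → ℝ} (hX : AEMeasurable X μ) (hlaw : μ.map X = gaussianReal 0 1) {c t : ℝ}
    (hct : c * t < 1 / 2) :
    mgf (fun ω => c * X ω ^ 2) μ t = (√(1 - 2 * (c * t)))⁻¹ := by
  rw [mgf_const_mul, ← mgf_sq_gaussianReal hct, ← hlaw, mgf_map hX (by fun_prop)]
  rfl

lemma measureReal_sum_le_le_exp_mul_prod_mgf {Ω ι : Type*} [MeasurableSpace Ω] {μ : Measure Ω}
    [Fintype ι] {Y : ι → Ω → ℝ} (hindep : iIndepFun Y μ) (hmeas : ∀ i, Measurable (Y i))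
    (hnonneg : ∀ i ω, 0 ≤ Y i ω) (a : ℝ) {t : ℝ} (ht : t ≤ 0) :
    μ.real {ω | ∑ i, Y i ω ≤ a} ≤ exp (-t * a) * ∏ i, mgf (Y i) μ t := by
  have := hindep.isProbabilityMeasure
  have hbounded : ∀ ω, ‖exp (t * (∑ i, Y i) ω)‖ ≤ 1 := fun ω => by
    rw [norm_of_nonneg (exp_pos _).le, exp_le_one_iff, Finset.sum_apply]
    exact mul_nonpos_of_nonpos_of_nonneg ht (Finset.sum_nonneg fun i _ => hnonneg i ω)
  have hint : Integrable (fun ω => exp (t * (∑ i, Y i) ω)) μ :=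
    (integrable_const 1).mono' (by fun_prop) (.of_forall hbounded)
  rw [← hindep.mgf_sum hmeas]
  simpa only [Finset.sum_apply] using measure_le_le_exp_mul_mgf a ht hint

lemma prod_sqrt_div_sqrt_snd_eq {r d : ℕ} (a : ℝ) (b : Fin r → ℝ) (hb : ∀ k, 0 ≤ b k) :
    ∏ p : Fin d × Fin r, √a / √(b p.2) = √a ^ (d * r) * ∏ k, b k ^ (-(d : ℝ) / 2) := by
  have hpow (k : Fin r) : (√a / √(b k)) ^ d = √a ^ d * b k ^ (-(d : ℝ) / 2) := by
    rw [div_pow, div_eq_mul_inv, sqrt_eq_rpow (b k), ← rpow_natCast (b k ^ _),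
      ← rpow_mul (hb k), ← rpow_neg (hb k)]
    ring_nf
  simp only [Fintype.prod_prod_type, Finset.prod_const, Finset.card_univ, Fintype.card_fin]
  rw [← Finset.prod_pow, Finset.prod_congr rfl fun k _ => hpow k, Finset.prod_mul_distrib,
    Finset.prod_const, Finset.card_univ, Fintype.card_fin, ← pow_mul]

theorem stmt_7_general {Ω : Type*} [MeasurableSpace Ω]
    (μ : Measure Ω) [IsProbabilityMeasure μ]
    {r d : ℕ} (hr : 0 < r) (hd : 0 < d)
    (σ : Fin r → ℝ) (hσpos : ∀ k, 0 < σ k)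
    (ξ : Ω → Fin d × Fin r → ℝ)
    (hmeas : ∀ p, Measurable fun ω => ξ ω p)
    (hgauss : ∀ p, Measure.map (fun ω => ξ ω p) μ = gaussianReal 0 1)
    (hindep : iIndepFun (fun p ω => ξ ω p) μ)
    (F2 : ℝ) (hF2 : F2 = ∑ k, σ k ^ 2)
    (τ : ℝ) :
    (μ {ω | (d : ℝ)⁻¹ * ∑ i : Fin d, ∑ k, σ k ^ 2 * ξ ω (i, k) ^ 2 ≤ F2 * τ}).toReal
      ≤ Real.exp ((d * τ) / 2) * Real.sqrt F2 ^ (d * r) *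
        ∏ k, (F2 + σ k ^ 2) ^ (-(d : ℝ) / 2) := by
  have hF2pos : 0 < F2 := hF2 ▸ Finset.sum_pos (fun k _ => pow_pos (hσpos k) 2)
    (Finset.univ_nonempty_iff.mpr ⟨⟨0, hr⟩⟩)
  set t : ℝ := -(2 * F2)⁻¹ with ht_def
  have ht : t ≤ 0 := neg_nonpos.mpr (by positivity)
  set Y : Fin d × Fin r → Ω → ℝ := fun p ω => σ p.2 ^ 2 * ξ ω p ^ 2
  have hevent : {ω | (d : ℝ)⁻¹ * ∑ i : Fin d, ∑ k, σ k ^ 2 * ξ ω (i, k) ^ 2 ≤ F2 * τ}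
      = {ω | ∑ p, Y p ω ≤ d * (F2 * τ)} := by
    ext ω
    rw [Set.mem_ofPred_eq, Set.mem_ofPred_eq, Fintype.sum_prod_type,
      inv_mul_le_iff₀ (Nat.cast_pos.mpr hd)]
  have hmgf (p : Fin d × Fin r) : mgf (Y p) μ t = √F2 / √(F2 + σ p.2 ^ 2) := by
    have hct : σ p.2 ^ 2 * t < 1 / 2 := by
      linarith [mul_nonpos_of_nonneg_of_nonpos (sq_nonneg (σ p.2)) ht]
    rw [mgf_const_mul_sq_of_map_eq_gaussianReal (hmeas p).aemeasurable (hgauss p) hct,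
      show 1 - 2 * (σ p.2 ^ 2 * t) = (F2 + σ p.2 ^ 2) / F2 by rw [ht_def]; field_simp; ring,
      sqrt_div' _ hF2pos.le, inv_div]
  have hindepY : iIndepFun Y μ :=
    hindep.comp (fun p x => σ p.2 ^ 2 * x ^ 2) fun p => by fun_prop
  calc (μ {ω | (d : ℝ)⁻¹ * ∑ i : Fin d, ∑ k, σ k ^ 2 * ξ ω (i, k) ^ 2 ≤ F2 * τ}).toReal
      = μ.real {ω | ∑ p, Y p ω ≤ d * (F2 * τ)} := by rw [hevent]; rfl
    _ ≤ exp (-t * (d * (F2 * τ))) * ∏ p, mgf (Y p) μ t :=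
      measureReal_sum_le_le_exp_mul_prod_mgf hindepY (fun p => by fun_prop)
        (fun p ω => by positivity) _ ht
    _ = exp ((d * τ) / 2) * √F2 ^ (d * r) * ∏ k, (F2 + σ k ^ 2) ^ (-(d : ℝ) / 2) := by
      rw [Finset.prod_congr rfl fun p _ => hmgf p,
        prod_sqrt_div_sqrt_snd_eq F2 (fun k => F2 + σ k ^ 2) fun k => by positivity, mul_assoc]
      congr 2
      rw [ht_def]
      field_simp

/-- lower-tail probabilistic bound: with `‖A‖_F² = σ₁²+⋯+σ_r²` and `X̄_d`
the average of `d` i.i.d. copies of `X = Σ_k σ_k² ξ_k²`, for every `τ ∈ [0,1)`,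
`P[X̄_d ≤ ‖A‖_F² τ] ≤ exp(dτ/2) ‖A‖_F^{dr} ∏_k (‖A‖_F² + σ_k²)^{-d/2}`. -/
theorem stmt_7 {Ω : Type*} [MeasurableSpace Ω]
    (μ : Measure Ω) [IsProbabilityMeasure μ]
    {r d : ℕ} (hr : 0 < r) (hd : 0 < d)
    (σ : Fin r → ℝ) (hσpos : ∀ k, 0 < σ k) (hσmono : Antitone σ)
    (ξ : Ω → Fin d × Fin r → ℝ)
    (hmeas : ∀ p, Measurable fun ω => ξ ω p)
    (hgauss : ∀ p, Measure.map (fun ω => ξ ω p) μ = gaussianReal 0 1)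
    (hindep : iIndepFun (fun p ω => ξ ω p) μ)
    (F2 : ℝ) (hF2 : F2 = ∑ k, σ k ^ 2)
    (τ : ℝ) (hτ0 : 0 ≤ τ) (hτ1 : τ < 1) :
    (μ {ω | (d : ℝ)⁻¹ * ∑ i : Fin d, ∑ k, σ k ^ 2 * ξ ω (i, k) ^ 2 ≤ F2 * τ}).toReal
      ≤ Real.exp ((d * τ) / 2) * Real.sqrt F2 ^ (d * r) *
        ∏ k, (F2 + σ k ^ 2) ^ (-(d : ℝ) / 2) :=
  stmt_7_general μ hr hd σ hσpos ξ hmeas hgauss hindep F2 hF2 τ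
end

section
/- Let σ₁ ≥ ... ≥ σ_r > 0 with r ≥ 2, F² = Σσ_k², X̄_d the average of d i.i.d. copies of X = Σσ_k²ξ_k² (ξ_k i.i.d. N(0,1)). If τ > 1 + σ₁²/(F² − σ₁²), then P[X̄_d ≥ F²τ] ≤ exp(−(d/2)(τ − C)) for the constant C = Σ_k ln(1/(1−σ_k²/F²)) < τ; in particular the tail probability decays exponentially in d. -/
/-!
Chernoff bound at `t = 1 / (2F²)`: for a standard Gaussian `ξ` and `a < 1/2`,
`E exp(a ξ²) = (1 - 2a)^(-1/2)`, so by independence the moment generating function of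
`d X̄_d = Σ_{i,k} σ_k² ξ_{ik}²` at `t` is `Π_k (1 - σ_k²/F²)^(-d/2) = exp(dC/2)`, whence
`P[d X̄_d ≥ d F² τ] ≤ exp(-dτ/2 + dC/2)`. For `C < τ`, with weights `w_k = σ_k²/F²` summing
to `1` and bounded by `α = σ₁²/F² < 1` (as `r ≥ 2`), `log (1/(1 - w)) ≤ w/(1 - w) ≤ w/(1 - α)`
gives `C ≤ 1/(1 - α) = 1 + σ₁²/(F² - σ₁²)`.
-/

open MeasureTheory ProbabilityTheory Real

lemma gaussianPDFReal_zero_one_mul_exp_mul_sq (a x : ℝ) :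
    gaussianPDFReal 0 1 x * exp (a * x ^ 2) = (√(2 * π))⁻¹ * exp (-(1 / 2 - a) * x ^ 2) := by
  simp only [gaussianPDFReal, NNReal.coe_one, mul_one, sub_zero]
  rw [mul_assoc, ← exp_add]
  ring_nf

lemma integrable_exp_mul_sq_gaussianReal {a : ℝ} (ha : a < 1 / 2) :
    Integrable (fun x => exp (a * x ^ 2)) (gaussianReal 0 1) := by
  rw [gaussianReal_of_var_ne_zero _ one_ne_zero, integrable_withDensity_iff_integrable_smul'
    (measurable_gaussianPDF 0 1) (ae_of_all _ fun _ => gaussianPDF_lt_top)]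
  simp only [gaussianPDF, ENNReal.toReal_ofReal (gaussianPDFReal_nonneg _ _ _), smul_eq_mul,
    gaussianPDFReal_zero_one_mul_exp_mul_sq]
  exact (integrable_exp_neg_mul_sq (by linarith)).const_mul _

lemma integral_exp_mul_sq_gaussianReal {a : ℝ} (ha : a < 1 / 2) :
    ∫ x, exp (a * x ^ 2) ∂(gaussianReal 0 1) = (√(1 - 2 * a))⁻¹ := by
  simp only [integral_gaussianReal_eq_integral_smul one_ne_zero, smul_eq_mul,
    gaussianPDFReal_zero_one_mul_exp_mul_sq, integral_const_mul, integral_gaussian]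
  rw [show π / (1 / 2 - a) = 2 * π * (1 - 2 * a)⁻¹ by field_simp,
    sqrt_mul' (2 * π) (inv_nonneg.2 (by linarith)), sqrt_inv, ← mul_assoc,
    inv_mul_cancel₀ (by positivity), one_mul]

section

variable {Ω : Type*} [MeasurableSpace Ω] {μ : Measure Ω}

section GaussianSquare

variable {X : Ω → ℝ} {c t : ℝ}

lemma integrable_exp_mul_const_mul_sq (hX : AEMeasurable X μ)
    (hlaw : μ.map X = gaussianReal 0 1) (hct : c * t < 1 / 2) :
    Integrable (fun ω => exp (t * (c * X ω ^ 2))) μ := by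
  have h := integrable_exp_mul_sq_gaussianReal hct
  rw [← hlaw, integrable_map_measure (by fun_prop) hX] at h
  convert h using 2 with ω
  simp only [Function.comp_apply]
  ring_nf

lemma mgf_const_mul_sq (hX : AEMeasurable X μ) (hlaw : μ.map X = gaussianReal 0 1)
    (hct : c * t < 1 / 2) :
    mgf (fun ω => c * X ω ^ 2) μ t = (√(1 - 2 * (c * t)))⁻¹ := by
  rw [← integral_exp_mul_sq_gaussianReal hct, ← hlaw, integral_map hX (by fun_prop), mgf]
  congr 1 with ω
  ring_nf

end GaussianSquare

theorem ProbabilityTheory.iIndepFun.measure_sum_ge_le_exp_mul_prod_mgf {ι : Type*} [Fintype ι]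
    {X : ι → Ω → ℝ} (h_indep : iIndepFun X μ) (h_meas : ∀ i, Measurable (X i)) {t : ℝ} (ht : 0 ≤ t)
    (h_int : ∀ i, Integrable (fun ω => exp (t * X i ω)) μ) (ε : ℝ) :
    μ.real {ω | ε ≤ ∑ i, X i ω} ≤ exp (-t * ε) * ∏ i, mgf (X i) μ t := by
  have := h_indep.isProbabilityMeasure
  have h := measure_ge_le_exp_mul_mgf ε ht
    (h_indep.integrable_exp_mul_sum h_meas (s := Finset.univ) fun i _ => h_int i)
  simpa only [Finset.sum_apply, h_indep.mgf_sum h_meas] using h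

theorem measure_ge_le_prod_of_sum_mul_sq_gaussian {ι : Type*} [Fintype ι] {ξ : ι → Ω → ℝ}
    (h_meas : ∀ i, Measurable (ξ i)) (h_law : ∀ i, μ.map (ξ i) = gaussianReal 0 1)
    (h_indep : iIndepFun ξ μ) (c : ι → ℝ) {t : ℝ} (ht : 0 ≤ t) (hct : ∀ i, c i * t < 1 / 2)
    (ε : ℝ) :
    μ.real {ω | ε ≤ ∑ i, c i * ξ i ω ^ 2} ≤ exp (-t * ε) * ∏ i, (√(1 - 2 * (c i * t)))⁻¹ := by
  have h_indep' : iIndepFun (fun i ω => c i * ξ i ω ^ 2) μ :=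
    h_indep.comp (fun i x => c i * x ^ 2) fun i => by fun_prop
  convert h_indep'.measure_sum_ge_le_exp_mul_prod_mgf (fun i => by fun_prop) ht
    (fun i => integrable_exp_mul_const_mul_sq (h_meas i).aemeasurable (h_law i) (hct i)) ε
    using 3 with i
  exact (mgf_const_mul_sq (h_meas i).aemeasurable (h_law i) (hct i)).symm

end

lemma single_lt_sum_of_pos {ι M : Type*} [Fintype ι] [Nontrivial ι] [AddCommMonoid M]
    [PartialOrder M] [IsOrderedCancelAddMonoid M] {f : ι → M} (hf : ∀ i, 0 < f i) (i : ι) :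
    f i < ∑ j, f j := by
  obtain ⟨j, hji⟩ := exists_ne i
  exact Finset.single_lt_sum hji (Finset.mem_univ i) (Finset.mem_univ j) (hf j)
    fun k _ _ => (hf k).le

lemma log_one_div_one_sub_le {w : ℝ} (hw : w < 1) : log (1 / (1 - w)) ≤ w / (1 - w) := by
  have h : 0 < 1 - w := by linarith
  calc log (1 / (1 - w)) ≤ 1 / (1 - w) - 1 := log_le_sub_one_of_pos (by positivity)
    _ = w / (1 - w) := by field_simp; ring

lemma sum_log_one_div_one_sub_le {ι : Type*} {s : Finset ι} {w : ι → ℝ} {m : ℝ}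
    (hw : ∀ i ∈ s, 0 ≤ w i) (hwm : ∀ i ∈ s, w i ≤ m) (hm : m < 1) :
    ∑ i ∈ s, log (1 / (1 - w i)) ≤ (∑ i ∈ s, w i) / (1 - m) := by
  rw [Finset.sum_div]
  refine Finset.sum_le_sum fun i hi => (log_one_div_one_sub_le ((hwm i hi).trans_lt hm)).trans ?_
  exact div_le_div_of_nonneg_left (hw i hi) (by linarith) (by linarith [hwm i hi])

lemma sum_log_one_div_one_sub_div_sum_le {ι : Type*} [Fintype ι] {f : ι → ℝ} (hf : ∀ i, 0 ≤ f i)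
    {i₀ : ι} (hmax : ∀ i, f i ≤ f i₀) (hlt : f i₀ < ∑ i, f i) :
    ∑ i, log (1 / (1 - f i / ∑ j, f j)) ≤ 1 + f i₀ / (∑ j, f j - f i₀) := by
  have hS : 0 < ∑ j, f j := (hf i₀).trans_lt hlt
  have hsum : ∑ i, f i / ∑ j, f j = 1 := by rw [← Finset.sum_div, div_self hS.ne']
  calc ∑ i, log (1 / (1 - f i / ∑ j, f j))
      ≤ (∑ i, f i / ∑ j, f j) / (1 - f i₀ / ∑ j, f j) :=
        sum_log_one_div_one_sub_le (fun i _ => div_nonneg (hf i) hS.le)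
          (fun i _ => by gcongr; exact hmax i) ((div_lt_one hS).2 hlt)
    _ = 1 + f i₀ / (∑ j, f j - f i₀) := by
        rw [hsum]
        field_simp [(sub_pos.2 hlt).ne']
        ring

lemma inv_sqrt_one_sub_eq_exp {w : ℝ} (hw : w < 1) :
    (√(1 - w))⁻¹ = exp (log (1 / (1 - w)) / 2) := by
  have h : 0 < 1 - w := by linarith
  rw [one_div, log_inv, neg_div, exp_neg, ← log_sqrt h.le, exp_log (sqrt_pos.2 h)]

/-- exponential decay of the upper tail: with `F² = Σ_k σ_k²`, `r ≥ 2`,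
and `X̄_d` the average of `d` i.i.d. copies of `X = Σ_k σ_k² ξ_k²`, if
`τ > 1 + σ₁²/(F² − σ₁²)` then, with `C = Σ_k ln(1/(1−σ_k²/F²))`, one has `C < τ` and
`P[X̄_d ≥ F²τ] ≤ exp(−(d/2)(τ − C))`. -/
theorem stmt_12 {Ω : Type*} [MeasurableSpace Ω]
    (μ : Measure Ω) [IsProbabilityMeasure μ]
    {r d : ℕ} (hr : 2 ≤ r) (hd : 0 < d)
    (σ : Fin r → ℝ) (hσpos : ∀ k, 0 < σ k) (hσmono : Antitone σ)
    (ξ : Ω → Fin d × Fin r → ℝ)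
    (hmeas : ∀ p, Measurable fun ω => ξ ω p)
    (hgauss : ∀ p, Measure.map (fun ω => ξ ω p) μ = gaussianReal 0 1)
    (hindep : iIndepFun (fun p ω => ξ ω p) μ)
    (F2 : ℝ) (hF2 : F2 = ∑ k, σ k ^ 2)
    (C : ℝ) (hC : C = ∑ k, Real.log (1 / (1 - σ k ^ 2 / F2)))
    (τ : ℝ) (hτ : 1 + σ ⟨0, by omega⟩ ^ 2 / (F2 - σ ⟨0, by omega⟩ ^ 2) < τ) :
    C < τ ∧
    (μ {ω | F2 * τ ≤ (d : ℝ)⁻¹ * ∑ i : Fin d, ∑ k, σ k ^ 2 * ξ ω (i, k) ^ 2}).toReal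
      ≤ Real.exp (-((d : ℝ) / 2) * (τ - C)) := by
  have : Nontrivial (Fin r) := Fin.nontrivial_iff_two_le.mpr hr
  set k₀ : Fin r := ⟨0, by omega⟩
  have hσF2 : ∀ k, σ k ^ 2 < F2 := hF2 ▸ single_lt_sum_of_pos fun k => pow_pos (hσpos k) 2
  have hF2pos : 0 < F2 := (pow_pos (hσpos k₀) 2).trans (hσF2 k₀)
  have hw : ∀ k, σ k ^ 2 / F2 < 1 := fun k => (div_lt_one hF2pos).2 (hσF2 k)
  have hCτ : C < τ := by
    rw [hF2] at hτ
    rw [hC, hF2]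
    exact (sum_log_one_div_one_sub_div_sum_le (fun k => sq_nonneg _)
      (fun k => pow_le_pow_left₀ (hσpos k).le (hσmono (Fin.le_def.2 (Nat.zero_le _))) 2)
      (hF2 ▸ hσF2 k₀)).trans_lt hτ
  refine ⟨hCτ, ?_⟩
  have hset : {ω | F2 * τ ≤ (d : ℝ)⁻¹ * ∑ i : Fin d, ∑ k, σ k ^ 2 * ξ ω (i, k) ^ 2}
      = {ω | d * (F2 * τ) ≤ ∑ p : Fin d × Fin r, σ p.2 ^ 2 * ξ ω p ^ 2} := by
    ext ω
    rw [Set.mem_ofPred_eq, Set.mem_ofPred_eq, Fintype.sum_prod_type,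
      le_inv_mul_iff₀ (by positivity)]
  have hprod :
      ∏ p : Fin d × Fin r, (√(1 - 2 * (σ p.2 ^ 2 * (2 * F2)⁻¹)))⁻¹ = exp (d * C / 2) := by
    have hterm : ∀ k, 1 - 2 * (σ k ^ 2 * (2 * F2)⁻¹) = 1 - σ k ^ 2 / F2 := fun k => by
      field_simp
    simp only [hterm, inv_sqrt_one_sub_eq_exp (hw _), ← exp_sum, Fintype.sum_prod_type,
      ← Finset.sum_div, ← hC, Finset.sum_const, Finset.card_univ, Fintype.card_fin, nsmul_eq_mul]
  calc (μ _).toReal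
      = μ.real {ω | d * (F2 * τ) ≤ ∑ p : Fin d × Fin r, σ p.2 ^ 2 * ξ ω p ^ 2} := by
        rw [hset]; rfl
    _ ≤ exp (-(2 * F2)⁻¹ * (d * (F2 * τ)))
          * ∏ p : Fin d × Fin r, (√(1 - 2 * (σ p.2 ^ 2 * (2 * F2)⁻¹)))⁻¹ :=
        measure_ge_le_prod_of_sum_mul_sq_gaussian (ξ := fun p ω => ξ ω p) hmeas hgauss hindep
          (fun p => σ p.2 ^ 2) (by positivity)
          (fun p => by rw [← div_eq_mul_inv, div_lt_iff₀ (by positivity)]; linarith [hσF2 p.2]) _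
    _ = exp (-((d : ℝ) / 2) * (τ - C)) := by
        rw [hprod, ← exp_add]
        congr 1
        field_simp
        ring
end
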